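/- arXiv:2508.09320 — 5 statements merged into one kernel-verified Lean document; each statement's English description precedes it below -/
import Mathlib

section
/- Sum-aggregation upper bound validity: Let I1, I2, I3 be disjoint finite index sets with bounds l(i) ≤ x(i) ≤ u(i). For any S2 ⊆ I2 and S3 ⊆ I3 with |I2 \ S2| + |S3| ≤ s, the quantity Σ_{i∈I1∪S2} x(i) + Σ_{i∈S3} x(i) is at most Σ_{i∈I1∪I2} u(i) + (the sum of the s largest values of max(y_j, 0) over j in the multiset Y consisting of −l(i) for i ∈ I2 together with u(i) for i ∈ I3, where each value is padded with 0 if fewer than s elements exist). -/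
/-! Relative to the full upper sum over `I1 ∪ I2`, keeping an index costs nothing (`x ≤ u`),
deleting `i ∈ I2` gains `-u i ≤ -l i`, hence at most `max (-l i) 0`, and inserting `i ∈ I3` gains at
most `max (u i) 0`. These gains form a sub-multiset of size at most `s` of the multiset `Y` of
candidate gains, and the positive parts of such a sub-multiset sum to at most the `s` largest
positive parts of `Y`: in a decreasingly sorted nonnegative list, no sublist of length at most `s`
beats the first `s` entries. -/

noncomputable def kthLargest (Y : Multiset ℝ) (i : ℕ) : ℝ :=
  ((Y.sort (· ≤ ·)).reverse).getD (i - 1) 0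

noncomputable def kthSmallest (Y : Multiset ℝ) (i : ℕ) : ℝ :=
  (Y.sort (· ≤ ·)).getD (i - 1) 0

open Finset

namespace List

theorem sum_range_getD_eq_sum_take {α : Type*} [AddCommMonoid α] (L : List α) (s : ℕ) :
    ∑ j ∈ Finset.range s, L.getD j 0 = (L.take s).sum := by
  induction s generalizing L with
  | zero => simp
  | succ s ih =>
    cases L with
    | nil => simp
    | cons a L => rw [Finset.sum_range_succ', take_succ_cons, sum_cons, ← ih L]; simp [add_comm]

variable {α : Type*} [AddCommMonoid α] [LinearOrder α] [IsOrderedAddMonoid α]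

theorem sum_take_succ_le_add_sum_take {a : α} {L : List α} (ha : 0 ≤ a)
    (hL : ∀ b ∈ L, b ≤ a) (k : ℕ) : (L.take (k + 1)).sum ≤ a + (L.take k).sum := by
  rw [take_add_one, sum_append, add_comm]
  gcongr
  cases h : L[k]? with
  | none => simpa using ha
  | some b => simpa using hL b (mem_of_getElem? h)

theorem Sublist.sum_le_sum_take {l L : List α} (h : l <+ L) (hL : L.Pairwise (· ≥ ·))
    (h0 : ∀ a ∈ L, 0 ≤ a) {s : ℕ} (hs : l.length ≤ s) : l.sum ≤ (L.take s).sum := by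
  induction h generalizing s with
  | slnil => simp
  | @cons l L a _ ih =>
    rw [pairwise_cons] at hL
    have h0L : ∀ b ∈ L, 0 ≤ b := fun b hb => h0 b (mem_cons_of_mem a hb)
    cases s with
    | zero => simp [length_eq_zero_iff.mp (Nat.le_zero.mp hs)]
    | succ k =>
      calc l.sum ≤ (L.take (k + 1)).sum := ih hL.2 h0L hs
        _ ≤ a + (L.take k).sum :=
          sum_take_succ_le_add_sum_take (h0 a mem_cons_self) hL.1 k
        _ = ((a :: L).take (k + 1)).sum := by simp
  | @cons_cons l L a _ ih =>
    rw [pairwise_cons] at hL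
    cases s with
    | zero => simp at hs
    | succ k =>
      have := ih hL.2 (fun b hb => h0 b (mem_cons_of_mem a hb)) (Nat.le_of_succ_le_succ hs)
      simpa using add_le_add_right this a

end List

theorem sum_max_zero_kthLargest_eq (Y : Multiset ℝ) (s : ℕ) :
    ∑ j ∈ range s, max (kthLargest Y (j + 1)) 0
      = ((((Y.sort (· ≤ ·)).reverse).map (max · 0)).take s).sum := by
  rw [← List.sum_range_getD_eq_sum_take]
  refine sum_congr rfl fun j _ => ?_
  simp only [kthLargest, List.getD_eq_getElem?_getD, List.getElem?_map]
  rw [Nat.add_sub_cancel]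
  cases ((Y.sort (· ≤ ·)).reverse[j]?) <;> simp

theorem Multiset.sum_map_max_zero_le_sum_kthLargest {T Y : Multiset ℝ} (hTY : T ≤ Y) {s : ℕ}
    (hs : card T ≤ s) :
    (T.map (max · 0)).sum ≤ ∑ j ∈ Finset.range s, max (kthLargest Y (j + 1)) 0 := by
  rw [sum_max_zero_kthLargest_eq]
  set L := (Y.sort (· ≤ ·)).reverse
  have hLY : (L : Multiset ℝ) = Y := by simp [L]
  have hL : (L.map (max · 0)).Pairwise (· ≥ ·) :=
    (List.pairwise_reverse.2 (Multiset.pairwise_sort Y _)).map _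
      fun _ _ h => max_le_max h le_rfl
  obtain ⟨t, rfl⟩ := Quot.exists_rep T
  obtain ⟨l, hlt, hlL⟩ := Multiset.coe_le.1 (hLY ▸ hTY)
  calc (Multiset.map (max · 0) (Quot.mk _ t)).sum = (l.map (max · 0)).sum :=
        by simp [(hlt.map _).sum_eq]
    _ ≤ _ := (hlL.map _).sum_le_sum_take hL (by simp) (by simpa [hlt.length_eq] using hs)

theorem sum_kept_add_sum_inserted_le {ι : Type*} [DecidableEq ι] {I1 I2 S2 S3 : Finset ι}
    (h12 : Disjoint I1 I2) (hS2 : S2 ⊆ I2) {l x u : ι → ℝ}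
    (hxu : ∀ i ∈ I1 ∪ S2 ∪ S3, x i ≤ u i) (hlu : ∀ i ∈ I2 \ S2, l i ≤ u i) :
    (∑ i ∈ I1 ∪ S2, x i) + ∑ i ∈ S3, x i ≤
      (∑ i ∈ I1 ∪ I2, u i) + ((∑ i ∈ I2 \ S2, max (-l i) 0) + ∑ i ∈ S3, max (u i) 0) := by
  have hsplit : ∑ i ∈ I1 ∪ I2, u i = (∑ i ∈ I1 ∪ S2, u i) + ∑ i ∈ I2 \ S2, u i := by
    rw [← sum_union (disjoint_union_left.2 ⟨h12.mono_right sdiff_subset, disjoint_sdiff⟩),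
      union_assoc, union_sdiff_of_subset hS2]
  have hkept : ∑ i ∈ I1 ∪ S2, x i ≤ ∑ i ∈ I1 ∪ S2, u i :=
    sum_le_sum fun i hi => hxu i (mem_union_left _ hi)
  have hinserted : ∑ i ∈ S3, x i ≤ ∑ i ∈ S3, max (u i) 0 :=
    sum_le_sum fun i hi => (hxu i (mem_union_right _ hi)).trans (le_max_left _ _)
  have hdeleted : 0 ≤ ∑ i ∈ I2 \ S2, (u i + max (-l i) 0) :=
    sum_nonneg fun i hi => by linarith [hlu i hi, le_max_left (-l i) 0]
  rw [sum_add_distrib] at hdeleted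
  linarith

theorem stmt1_general {ι : Type*} [DecidableEq ι] (I1 I2 I3 : Finset ι)
    (h12 : Disjoint I1 I2)
    (l x u : ι → ℝ) (hb : ∀ i ∈ I1 ∪ I2 ∪ I3, l i ≤ x i ∧ x i ≤ u i) (s : ℕ)
    (S2 : Finset ι) (hS2 : S2 ⊆ I2) (S3 : Finset ι) (hS3 : S3 ⊆ I3)
    (hbud : (I2 \ S2).card + S3.card ≤ s) :
    (∑ i ∈ I1 ∪ S2, x i) + ∑ i ∈ S3, x i ≤
      (∑ i ∈ I1 ∪ I2, u i) +
        ∑ j ∈ Finset.range s,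
          max (kthLargest ((I2.val.map fun i => -(l i)) + I3.val.map u) (j + 1)) 0 := by
  have hxu : ∀ i ∈ I1 ∪ S2 ∪ S3, x i ≤ u i := fun i hi =>
    (hb i (by grind)).2
  have hlu : ∀ i ∈ I2 \ S2, l i ≤ u i := fun i hi =>
    have h := hb i (by grind); h.1.trans h.2
  set T := ((I2 \ S2).val.map fun i => -(l i)) + S3.val.map u
  have hTY : T ≤ (I2.val.map fun i => -(l i)) + I3.val.map u :=
    add_le_add (Multiset.map_le_map (val_le_iff.2 sdiff_subset))
      (Multiset.map_le_map (val_le_iff.2 hS3))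
  have hT : Multiset.card T ≤ s := by
    simp only [T, Multiset.card_add, Multiset.card_map]
    exact hbud
  calc _ ≤ _ := sum_kept_add_sum_inserted_le h12 hS2 hxu hlu
    _ = (∑ i ∈ I1 ∪ I2, u i) + (T.map (max · 0)).sum := by
      simp only [T, Multiset.map_add, Multiset.sum_add, Multiset.map_map]; rfl
    _ ≤ _ := by grw [Multiset.sum_map_max_zero_le_sum_kthLargest hTY hT]

/-- Sum-aggregation upper bound validity. -/
theorem stmt1 {ι : Type*} [DecidableEq ι] (I1 I2 I3 : Finset ι)
    (h12 : Disjoint I1 I2) (h13 : Disjoint I1 I3) (h23 : Disjoint I2 I3)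
    (l x u : ι → ℝ) (hb : ∀ i ∈ I1 ∪ I2 ∪ I3, l i ≤ x i ∧ x i ≤ u i) (s : ℕ)
    (S2 : Finset ι) (hS2 : S2 ⊆ I2) (S3 : Finset ι) (hS3 : S3 ⊆ I3)
    (hbud : (I2 \ S2).card + S3.card ≤ s) :
    (∑ i ∈ I1 ∪ S2, x i) + ∑ i ∈ S3, x i ≤
      (∑ i ∈ I1 ∪ I2, u i) +
        ∑ j ∈ Finset.range s,
          max (kthLargest ((I2.val.map fun i => -(l i)) + I3.val.map u) (j + 1)) 0 :=
  stmt1_general I1 I2 I3 h12 l x u hb s S2 hS2 S3 hS3 hbud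
end

section
/- Max-aggregation upper bound (general case): Suppose I1 ≠ ∅ or s < |I2|, and s ≥ 1. Then for any S2 ⊆ I2, S3 ⊆ I3 with |I2 \ S2| + |S3| ≤ s and any l ≤ x ≤ u, the maximum of x over I1 ∪ S2 ∪ S3 is at most max(max_{i∈I1} u(i), max_{i∈I2} u(i), max_{i∈I3} u(i)) (maxima over empty sets taken as −∞); moreover this bound is tight, i.e., attained by some admissible choice and assignment. -/
/-- Maximum of `x` over a finset, valued in `EReal`, so that the
maximum over the empty set is `⊥ = -∞`. -/
noncomputable def maxE {ι : Type*} (S : Finset ι) (x : ι → ℝ) : EReal :=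
  S.sup fun i => ((x i : ℝ) : EReal)

/-- Max-aggregation upper bound, general case:  or , with . -/
theorem stmt4 {ι : Type*} [DecidableEq ι] (I1 I2 I3 : Finset ι)
    (h12 : Disjoint I1 I2) (h13 : Disjoint I1 I3) (h23 : Disjoint I2 I3)
    (l u : ι → ℝ) (hlu : ∀ i ∈ I1 ∪ I2 ∪ I3, l i ≤ u i) (s : ℕ)
    (hcase : I1.Nonempty ∨ s < I2.card) (hs : 1 ≤ s) :
    (∀ S2 ⊆ I2, ∀ S3 ⊆ I3, (I2 \ S2).card + S3.card ≤ s →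
      ∀ x : ι → ℝ, (∀ i ∈ I1 ∪ I2 ∪ I3, l i ≤ x i ∧ x i ≤ u i) →
        maxE (I1 ∪ S2 ∪ S3) x ≤ max (maxE I1 u) (max (maxE I2 u) (maxE I3 u))) ∧
    (∃ S2 ⊆ I2, ∃ S3 ⊆ I3, (I2 \ S2).card + S3.card ≤ s ∧
      ∃ x : ι → ℝ, (∀ i ∈ I1 ∪ I2 ∪ I3, l i ≤ x i ∧ x i ≤ u i) ∧
        maxE (I1 ∪ S2 ∪ S3) x = max (maxE I1 u) (max (maxE I2 u) (maxE I3 u))) := by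
  have key : ∀ S2 ⊆ I2, ∀ S3 ⊆ I3,
      ∀ x : ι → ℝ, (∀ i ∈ I1 ∪ I2 ∪ I3, l i ≤ x i ∧ x i ≤ u i) →
        maxE (I1 ∪ S2 ∪ S3) x ≤ max (maxE I1 u) (max (maxE I2 u) (maxE I3 u)) := by
    intro S2 hS2 S3 hS3 x hx
    refine Finset.sup_le fun i hi => ?_
    simp only [Finset.mem_union] at hi
    have hi' : i ∈ I1 ∪ I2 ∪ I3 := by
      simp only [Finset.mem_union]
      rcases hi with (h | h) | h
      · exact Or.inl (Or.inl h)
      · exact Or.inl (Or.inr (hS2 h))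
      · exact Or.inr (hS3 h)
    have hxu : ((x i : ℝ) : EReal) ≤ ((u i : ℝ) : EReal) := by
      exact_mod_cast (hx i hi').2
    refine hxu.trans ?_
    simp only [maxE]
    rcases hi with (h | h) | h
    · exact le_max_of_le_left (Finset.le_sup (f := fun j => ((u j : ℝ) : EReal)) h)
    · exact le_max_of_le_right (le_max_of_le_left (Finset.le_sup (f := fun j => ((u j : ℝ) : EReal)) (hS2 h)))
    · exact le_max_of_le_right (le_max_of_le_right (Finset.le_sup (f := fun j => ((u j : ℝ) : EReal)) (hS3 h)))
  refine ⟨fun S2 hS2 S3 hS3 _ x hx => key S2 hS2 S3 hS3 x hx, ?_⟩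
  have hxu : ∀ i ∈ I1 ∪ I2 ∪ I3, l i ≤ u i ∧ u i ≤ u i :=
    fun i hi => ⟨hlu i hi, le_refl _⟩
  rcases I3.eq_empty_or_nonempty with h3 | h3
  · refine ⟨I2, le_refl _, ∅, Finset.empty_subset _, by simp, u, hxu, ?_⟩
    refine le_antisymm (key I2 (le_refl _) ∅ (Finset.empty_subset _) u hxu) ?_
    subst h3
    simp only [maxE, Finset.sup_empty, Finset.sup_union]
    exact max_le (le_trans le_sup_left le_sup_left)
      (max_le (le_trans le_sup_right le_sup_left) bot_le)
  · obtain ⟨i3, hi3, hmax⟩ := I3.exists_max_image u h3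
    refine ⟨I2, le_refl _, {i3}, by simpa using hi3, by simpa using hs, u, hxu, ?_⟩
    refine le_antisymm (key I2 (le_refl _) {i3} (by simpa using hi3) u hxu) ?_
    simp only [maxE]
    refine max_le ?_ (max_le ?_ ?_)
    · exact Finset.sup_mono (by intro a ha; simp [ha])
    · exact Finset.sup_mono (by intro a ha; simp [ha])
    · refine Finset.sup_le fun i hi => ?_
      have h1 : ((u i : ℝ) : EReal) ≤ ((u i3 : ℝ) : EReal) := by
        exact_mod_cast hmax i hi
      exact h1.trans (Finset.le_sup (f := fun j => ((u j : ℝ) : EReal)) (Finset.mem_union_right _ (Finset.mem_singleton_self i3)))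
end

section
/- Max-aggregation lower bound, case I1 = ∅ and s < |I2|: for every S2 ⊆ I2, S3 ⊆ I3 with |I2\S2| + |S3| ≤ s and every l ≤ x ≤ u, the maximum of x over S2 ∪ S3 is at least the (|I2| − s)-th smallest lower bound among {l(i) : i ∈ I2}; moreover this bound is tight. -/
/-!
Let `L` be the `k`-th smallest lower bound on `I2`, with `k = |I2| - s ≥ 1`. Fewer than `k`
indices of `I2` have `l i < L`, while the budget forces `|S2| ≥ k`; so some `i ∈ S2` has
`L ≤ l i ≤ x i`. For tightness take `x = l`, `S3 = ∅` and `S2 = {i ∈ I2 | l i ≤ L}`, which has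
at least `k` elements and on which the maximum of `l` is exactly `L`.
-/

open Finset

namespace List.Pairwise

variable {α : Type*} [LinearOrder α] {L : List α}

theorem countP_lt_getElem_le (hL : L.Pairwise (· ≤ ·)) {j : ℕ} (hj : j < L.length) :
    L.countP (· < L[j]) ≤ j := by
  have hdrop : (L.drop j).countP (· < L[j]) = 0 := by
    have hsorted := hL.drop (i := j)
    rw [List.drop_eq_getElem_cons hj, List.pairwise_cons] at hsorted
    refine List.countP_eq_zero.2 fun a ha => ?_
    rw [List.drop_eq_getElem_cons hj, List.mem_cons] at ha
    rcases ha with rfl | ha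
    · simp
    · simpa using hsorted.1 a ha
  calc L.countP (· < L[j])
      = (L.take j).countP (· < L[j]) + (L.drop j).countP (· < L[j]) := by
        rw [← List.countP_append, List.take_append_drop]
    _ ≤ j := by
        rw [hdrop, add_zero]
        exact List.countP_le_length.trans (List.length_take_le _ _)

theorem succ_le_countP_le_getElem (hL : L.Pairwise (· ≤ ·)) {j : ℕ} (hj : j < L.length) :
    j + 1 ≤ L.countP (· ≤ L[j]) := by
  have htake : (L.take (j + 1)).countP (· ≤ L[j]) = j + 1 := by
    have hsorted := hL.take (i := j + 1)
    rw [← List.take_concat_get' L j hj, List.pairwise_append] at hsorted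
    refine (List.countP_eq_length.2 fun a ha => ?_).trans (by simp; omega)
    rw [← List.take_concat_get' L j hj, List.mem_append, List.mem_singleton] at ha
    rcases ha with ha | rfl
    · simpa using hsorted.2.2 a ha
    · simp
  exact htake.symm.trans_le (List.take_sublist _ _).countP_le

end List.Pairwise

section kthSmallest

variable {M : Multiset ℝ} {k : ℕ}

theorem kthSmallest_eq_getElem (hk₁ : 1 ≤ k) (hk : k ≤ M.card) :
    kthSmallest M k = (M.sort (· ≤ ·))[k - 1]'(by simp; omega) :=
  List.getD_eq_getElem _ _ _

theorem countP_lt_kthSmallest_lt (hk₁ : 1 ≤ k) (hk : k ≤ M.card) :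
    M.countP (· < kthSmallest M k) < k := by
  have h := (M.pairwise_sort (· ≤ ·)).countP_lt_getElem_le (j := k - 1) (by simp; omega)
  rw [← kthSmallest_eq_getElem hk₁ hk, ← Multiset.coe_countP, Multiset.sort_eq] at h
  omega

theorem le_countP_le_kthSmallest (hk₁ : 1 ≤ k) (hk : k ≤ M.card) :
    k ≤ M.countP (· ≤ kthSmallest M k) := by
  have h := (M.pairwise_sort (· ≤ ·)).succ_le_countP_le_getElem (j := k - 1) (by simp; omega)
  rw [← kthSmallest_eq_getElem hk₁ hk, ← Multiset.coe_countP, Multiset.sort_eq] at h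
  omega

end kthSmallest

section Finset

variable {ι : Type*} {I : Finset ι} {f : ι → ℝ} {k : ℕ}

theorem card_filter_lt_kthSmallest_lt (hk₁ : 1 ≤ k) (hk : k ≤ #I) :
    #{i ∈ I | f i < kthSmallest (I.val.map f) k} < k := by
  have h := countP_lt_kthSmallest_lt (M := I.val.map f) hk₁ (by simpa using hk)
  rwa [Multiset.countP_map] at h

theorem le_card_filter_le_kthSmallest (hk₁ : 1 ≤ k) (hk : k ≤ #I) :
    k ≤ #{i ∈ I | f i ≤ kthSmallest (I.val.map f) k} := by
  have h := le_countP_le_kthSmallest (M := I.val.map f) hk₁ (by simpa using hk)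
  rwa [Multiset.countP_map] at h

theorem exists_kthSmallest_le_of_subset {S : Finset ι} (hSI : S ⊆ I) (hk₁ : 1 ≤ k)
    (hkS : k ≤ #S) : ∃ i ∈ S, kthSmallest (I.val.map f) k ≤ f i := by
  by_contra! hlt
  have hsub : S ⊆ {i ∈ I | f i < kthSmallest (I.val.map f) k} :=
    fun i hi => mem_filter.2 ⟨hSI hi, hlt i hi⟩
  have := card_le_card hsub
  have := card_filter_lt_kthSmallest_lt (f := f) hk₁ (hkS.trans (card_le_card hSI))
  omega

theorem coe_le_maxE {S : Finset ι} (x : ι → ℝ) {i : ι} (hi : i ∈ S) :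
    ((x i : ℝ) : EReal) ≤ maxE S x :=
  le_sup (f := fun i => ((x i : ℝ) : EReal)) hi

theorem maxE_le_coe_iff {S : Finset ι} {x : ι → ℝ} {c : ℝ} :
    maxE S x ≤ (c : EReal) ↔ ∀ i ∈ S, x i ≤ c := by
  simp only [maxE, Finset.sup_le_iff, EReal.coe_le_coe_iff]

end Finset

theorem stmt5_general {ι : Type*} [DecidableEq ι] (I2 I3 : Finset ι)
    (l u : ι → ℝ) (hlu : ∀ i ∈ I2 ∪ I3, l i ≤ u i) (s : ℕ) (hs : s < I2.card) :
    (∀ S2 ⊆ I2, ∀ S3 ⊆ I3, (I2 \ S2).card + S3.card ≤ s →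
      ∀ x : ι → ℝ, (∀ i ∈ I2 ∪ I3, l i ≤ x i ∧ x i ≤ u i) →
        ((kthSmallest (I2.val.map l) (I2.card - s) : ℝ) : EReal) ≤ maxE (S2 ∪ S3) x) ∧
    (∃ S2 ⊆ I2, ∃ S3 ⊆ I3, (I2 \ S2).card + S3.card ≤ s ∧
      ∃ x : ι → ℝ, (∀ i ∈ I2 ∪ I3, l i ≤ x i ∧ x i ≤ u i) ∧
        maxE (S2 ∪ S3) x = ((kthSmallest (I2.val.map l) (I2.card - s) : ℝ) : EReal)) := by
  set L := kthSmallest (I2.val.map l) (#I2 - s)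
  have hk₁ : 1 ≤ #I2 - s := by omega
  constructor
  · intro S2 hS2 S3 _ hbudget x hx
    have hkS2 : #I2 - s ≤ #S2 := by
      have := card_sdiff_of_subset hS2
      have := card_le_card hS2
      omega
    obtain ⟨i, hi, hLi⟩ := exists_kthSmallest_le_of_subset hS2 hk₁ hkS2
    have hxi : L ≤ x i := hLi.trans (hx i (mem_union_left _ (hS2 hi))).1
    exact (EReal.coe_le_coe_iff.2 hxi).trans (coe_le_maxE x (mem_union_left _ hi))
  · set S2 := {i ∈ I2 | l i ≤ L}
    have hkS2 : #I2 - s ≤ #S2 := le_card_filter_le_kthSmallest hk₁ (Nat.sub_le _ _)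
    refine ⟨S2, filter_subset _ _, ∅, empty_subset _, ?_, l,
      fun i hi => ⟨le_rfl, hlu i hi⟩, ?_⟩
    · have : #(I2 \ S2) = #I2 - #S2 := card_sdiff_of_subset (filter_subset _ _)
      rw [card_empty]
      omega
    · obtain ⟨i, hi, hLi⟩ := exists_kthSmallest_le_of_subset (filter_subset _ _) hk₁ hkS2
      rw [union_empty]
      refine le_antisymm (maxE_le_coe_iff.2 fun j hj => (mem_filter.1 hj).2) ?_
      exact (EReal.coe_le_coe_iff.2 hLi).trans (coe_le_maxE l hi)

/-- Max-aggregation lower bound, case  and . -/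
theorem stmt5 {ι : Type*} [DecidableEq ι] (I2 I3 : Finset ι)
    (h23 : Disjoint I2 I3)
    (l u : ι → ℝ) (hlu : ∀ i ∈ I2 ∪ I3, l i ≤ u i) (s : ℕ) (hs : s < I2.card) :
    (∀ S2 ⊆ I2, ∀ S3 ⊆ I3, (I2 \ S2).card + S3.card ≤ s →
      ∀ x : ι → ℝ, (∀ i ∈ I2 ∪ I3, l i ≤ x i ∧ x i ≤ u i) →
        ((kthSmallest (I2.val.map l) (I2.card - s) : ℝ) : EReal) ≤ maxE (S2 ∪ S3) x) ∧
    (∃ S2 ⊆ I2, ∃ S3 ⊆ I3, (I2 \ S2).card + S3.card ≤ s ∧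
      ∃ x : ι → ℝ, (∀ i ∈ I2 ∪ I3, l i ≤ x i ∧ x i ≤ u i) ∧
        maxE (S2 ∪ S3) x = ((kthSmallest (I2.val.map l) (I2.card - s) : ℝ) : EReal)) :=
  stmt5_general I2 I3 l u hlu s hs
end

section
/- Max-aggregation lower bound, case I1 ≠ ∅ and s < |I2|: for every admissible S2 ⊆ I2, S3 ⊆ I3 with |I2\S2| + |S3| ≤ s and every l ≤ x ≤ u, the maximum of x over I1 ∪ S2 ∪ S3 is at least max( lo(I1, |I1|), lo(I2, |I2| − s) ), where lo(I1,|I1|) is the largest lower bound in I1 and lo(I2, |I2| − s) is the (|I2| − s)-th smallest lower bound in I2; and this bound is tight. -/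
-- list lemmas
lemma sorted_getD_mono {L : List ℝ} (h : L.Pairwise (· ≤ ·)) {i j : ℕ}
    (hij : i ≤ j) (hj : j < L.length) : L.getD i 0 ≤ L.getD j 0 := by
  rw [List.getD_eq_getElem L 0 (lt_of_le_of_lt hij hj), List.getD_eq_getElem L 0 hj]
  exact h.rel_get_of_le (a := ⟨i, lt_of_le_of_lt hij hj⟩) (b := ⟨j, hj⟩) (Fin.mk_le_mk.mpr hij)

lemma list_count_lt {L : List ℝ} (h : L.Pairwise (· ≤ ·)) {j : ℕ} (hj : j < L.length) :
    (L.filter (fun a => decide (a < L.getD j 0))).length ≤ j := by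
  have hdrop : (L.drop j).filter (fun a => decide (a < L.getD j 0)) = [] := by
    apply List.filter_eq_nil_iff.mpr
    intro a ha
    obtain ⟨m, hm⟩ := List.get_of_mem ha
    have hlt : j + m.1 < L.length := by have := m.2; simp [List.length_drop] at this; omega
    have : a = L[j + m.1]'hlt := by
      rw [← hm]; simp [List.getElem_drop]
    simp only [decide_eq_true_eq, not_lt]
    rw [this, List.getD_eq_getElem L 0 hj]
    exact h.rel_get_of_le (a := ⟨j, hj⟩)
      (b := ⟨j + m.1, hlt⟩) (Fin.mk_le_mk.mpr (Nat.le_add_right _ _))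
  calc (L.filter (fun a => decide (a < L.getD j 0))).length
      = ((L.take j ++ L.drop j).filter (fun a => decide (a < L.getD j 0))).length := by
        rw [List.take_append_drop]
    _ ≤ j := by
        rw [List.filter_append, hdrop, List.append_nil]
        exact le_trans (List.length_filter_le _ _) (by simp)

lemma list_count_le {L : List ℝ} (h : L.Pairwise (· ≤ ·)) {j : ℕ} (hj : j < L.length) :
    j + 1 ≤ (L.filter (fun a => decide (a ≤ L.getD j 0))).length := by
  have htake : (L.take (j+1)).filter (fun a => decide (a ≤ L.getD j 0)) = L.take (j+1) := by
    apply List.filter_eq_self.mpr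
    intro a ha
    obtain ⟨m, hm⟩ := List.get_of_mem ha
    have hmlt : m.1 < j + 1 := by have := m.2; simp [List.length_take] at this; omega
    have : a = L[m.1] := by
      rw [← hm]; simp [List.getElem_take]
    simp only [decide_eq_true_eq]
    rw [this, List.getD_eq_getElem L 0 hj]
    exact h.rel_get_of_le (a := ⟨m.1, lt_of_lt_of_le hmlt hj⟩) (b := ⟨j, hj⟩) (Fin.mk_le_mk.mpr (by omega))
  calc j + 1 = (L.take (j+1)).length := by simp [List.length_take]; omega
    _ = ((L.take (j+1)).filter (fun a => decide (a ≤ L.getD j 0))).length := by rw [htake]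
    _ ≤ (L.filter (fun a => decide (a ≤ L.getD j 0))).length :=
        ((List.take_sublist _ _).filter _).length_le

lemma list_mem_le {L : List ℝ} (h : L.Pairwise (· ≤ ·)) {a : ℝ} (ha : a ∈ L) :
    a ≤ L.getD (L.length - 1) 0 := by
  obtain ⟨m, hm⟩ := List.get_of_mem ha
  have h1 : 0 < L.length := List.length_pos_iff.mpr (List.ne_nil_of_mem ha)
  rw [← hm]
  exact sorted_getD_mono h (by omega : m.1 ≤ L.length - 1) (by omega) |>.trans_eq' (by
    rw [List.getD_eq_getElem L 0 (by omega : (m.1 : ℕ) < L.length)]; rfl)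

lemma card_filter_eq_filter_length {ι : Type*} (S : Finset ι) (f : ι → ℝ) (p : ℝ → Prop)
    [DecidablePred p] [DecidablePred (fun i => p (f i))] :
    (S.filter (fun i => p (f i))).card =
      (((S.val.map f).sort (· ≤ ·)).filter (fun a => decide (p a))).length := by
  calc (S.filter (fun i => p (f i))).card
      = Multiset.countP (fun i => p (f i)) S.val := by
        rw [Finset.card, Finset.filter_val, Multiset.countP_eq_card_filter]
    _ = Multiset.countP p (S.val.map f) := by
        rw [Multiset.countP_map, Multiset.countP_eq_card_filter]; congr
    _ = Multiset.countP p (((S.val.map f).sort (· ≤ ·)) : List ℝ) := by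
        rw [Multiset.sort_eq]
    _ = (((S.val.map f).sort (· ≤ ·)).filter (fun a => decide (p a))).length := by
        rw [Multiset.coe_countP, List.countP_eq_length_filter]

section FinsetLemmas
variable {ι : Type*} (S : Finset ι) (f : ι → ℝ)

lemma length_sort_map : ((S.val.map f).sort (· ≤ ·)).length = S.card := by
  rw [Multiset.length_sort, Multiset.card_map]; rfl

lemma kth_attained {k : ℕ} (h0 : 0 < k) (hk : k ≤ S.card) :
    ∃ i ∈ S, f i = kthSmallest (S.val.map f) k := by
  have hlen := length_sort_map S f
  have hmem : kthSmallest (S.val.map f) k ∈ (S.val.map f).sort (· ≤ ·) := by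
    unfold kthSmallest
    rw [List.getD_eq_getElem _ 0 (by omega)]
    exact List.getElem_mem _
  rw [Multiset.mem_sort] at hmem
  obtain ⟨i, hi, hfi⟩ := Multiset.mem_map.mp hmem
  exact ⟨i, hi, hfi⟩

lemma kth_card_max (_hS : S.Nonempty) :
    ∀ i ∈ S, f i ≤ kthSmallest (S.val.map f) S.card := by
  intro i hi
  have hlen := length_sort_map S f
  have hmem : f i ∈ (S.val.map f).sort (· ≤ ·) := by
    rw [Multiset.mem_sort]
    exact Multiset.mem_map_of_mem f hi
  have := list_mem_le (Multiset.pairwise_sort _ _) hmem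
  rwa [hlen] at this

lemma exists_ge_kth {S2 : Finset ι} {k : ℕ} (h0 : 0 < k) (hk : k ≤ S.card)
    (hsub : S2 ⊆ S) (hcard : k ≤ S2.card) :
    ∃ i ∈ S2, kthSmallest (S.val.map f) k ≤ f i := by
  classical
  set c := kthSmallest (S.val.map f) k with hc
  have hcrw : c = ((S.val.map f).sort (· ≤ ·)).getD (k - 1) 0 := rfl
  have hlen := length_sort_map S f
  have hcount : (S.filter (fun i => f i < c)).card ≤ k - 1 := by
    rw [card_filter_eq_filter_length S f (fun a => a < c), hcrw]
    exact list_count_lt (Multiset.pairwise_sort _ _) (by omega)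
  by_contra hcon
  push_neg at hcon
  have hsub2 : S2 ⊆ S.filter (fun i => f i < c) := fun i hi =>
    Finset.mem_filter.mpr ⟨hsub hi, hcon i hi⟩
  have := Finset.card_le_card hsub2
  omega

lemma exists_subset_le {k : ℕ} (h0 : 0 < k) (hk : k ≤ S.card) :
    ∃ S2 ⊆ S, k ≤ S2.card ∧ ∀ i ∈ S2, f i ≤ kthSmallest (S.val.map f) k := by
  classical
  set c := kthSmallest (S.val.map f) k with hc
  refine ⟨S.filter (fun i => f i ≤ c), Finset.filter_subset _ _, ?_, ?_⟩
  · have hcrw : c = ((S.val.map f).sort (· ≤ ·)).getD (k - 1) 0 := rfl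
    have hlen := length_sort_map S f
    rw [card_filter_eq_filter_length S f (fun a => a ≤ c), hcrw]
    have := list_count_le (L := (S.val.map f).sort (· ≤ ·))
      (Multiset.pairwise_sort _ _) (j := k - 1) (by omega)
    omega
  · intro i hi
    exact (Finset.mem_filter.mp hi).2

end FinsetLemmas

/-- Max-aggregation lower bound, case  and . -/
theorem stmt7 {ι : Type*} [DecidableEq ι] (I1 I2 I3 : Finset ι)
    (h12 : Disjoint I1 I2) (h13 : Disjoint I1 I3) (h23 : Disjoint I2 I3)
    (hI1 : I1.Nonempty)
    (l u : ι → ℝ) (hlu : ∀ i ∈ I1 ∪ I2 ∪ I3, l i ≤ u i) (s : ℕ) (hs : s < I2.card) :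
    (∀ S2 ⊆ I2, ∀ S3 ⊆ I3, (I2 \ S2).card + S3.card ≤ s →
      ∀ x : ι → ℝ, (∀ i ∈ I1 ∪ I2 ∪ I3, l i ≤ x i ∧ x i ≤ u i) →
        ((max (kthSmallest (I1.val.map l) I1.card)
            (kthSmallest (I2.val.map l) (I2.card - s)) : ℝ) : EReal)
          ≤ maxE (I1 ∪ S2 ∪ S3) x) ∧
    (∃ S2 ⊆ I2, ∃ S3 ⊆ I3, (I2 \ S2).card + S3.card ≤ s ∧
      ∃ x : ι → ℝ, (∀ i ∈ I1 ∪ I2 ∪ I3, l i ≤ x i ∧ x i ≤ u i) ∧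
        maxE (I1 ∪ S2 ∪ S3) x =
          ((max (kthSmallest (I1.val.map l) I1.card)
              (kthSmallest (I2.val.map l) (I2.card - s)) : ℝ) : EReal)) := by
  classical
  have hk0 : 0 < I2.card - s := by omega
  have hkcard : I2.card - s ≤ I2.card := by omega
  have hI1card : 0 < I1.card := Finset.card_pos.mpr hI1
  have hcoemax : ∀ a b : ℝ, ((max a b : ℝ) : EReal) = max (a : EReal) (b : EReal) :=
    fun a b => (EReal.coe_strictMono.monotone.map_max)
  have hpart1 : ∀ S2 ⊆ I2, ∀ S3 ⊆ I3, (I2 \ S2).card + S3.card ≤ s →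
      ∀ x : ι → ℝ, (∀ i ∈ I1 ∪ I2 ∪ I3, l i ≤ x i ∧ x i ≤ u i) →
        ((max (kthSmallest (I1.val.map l) I1.card)
            (kthSmallest (I2.val.map l) (I2.card - s)) : ℝ) : EReal)
          ≤ maxE (I1 ∪ S2 ∪ S3) x := by
    intro S2 hS2 S3 hS3 hcard x hx
    rw [hcoemax]
    unfold maxE
    apply max_le
    · obtain ⟨i, hi, hfi⟩ := kth_attained I1 l hI1card (le_refl _)
      have hix : (kthSmallest (I1.val.map l) I1.card : EReal) ≤ (x i : EReal) := by
        rw [EReal.coe_le_coe_iff, ← hfi]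
        exact (hx i (by simp [hi])).1
      exact hix.trans (Finset.le_sup (f := fun j => ((x j : ℝ) : EReal)) (s := I1 ∪ S2 ∪ S3) (Finset.mem_union_left _ (Finset.mem_union_left _ hi)))
    · have hS2card : I2.card - s ≤ S2.card := by
        have h1 : (I2 \ S2).card = I2.card - S2.card := Finset.card_sdiff_of_subset hS2
        have h2 : S2.card ≤ I2.card := Finset.card_le_card hS2
        omega
      obtain ⟨i, hi, hfi⟩ := exists_ge_kth I2 l hk0 hkcard hS2 hS2card
      have hmem : i ∈ I1 ∪ I2 ∪ I3 := by simp [hS2 hi]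
      have hix : (kthSmallest (I2.val.map l) (I2.card - s) : EReal) ≤ (x i : EReal) := by
        rw [EReal.coe_le_coe_iff]
        exact hfi.trans (hx i hmem).1
      exact hix.trans (Finset.le_sup (f := fun j => ((x j : ℝ) : EReal)) (s := I1 ∪ S2 ∪ S3) (Finset.mem_union_left _ (Finset.mem_union_right _ hi)))
  refine ⟨hpart1, ?_⟩
  obtain ⟨S2, hS2sub, hS2card, hS2le⟩ := exists_subset_le I2 l hk0 hkcard
  have hcardcond : (I2 \ S2).card + (∅ : Finset ι).card ≤ s := by
    have h1 : (I2 \ S2).card = I2.card - S2.card := Finset.card_sdiff_of_subset hS2sub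
    simp only [Finset.card_empty]
    omega
  have hxbound : ∀ i ∈ I1 ∪ I2 ∪ I3, l i ≤ l i ∧ l i ≤ u i :=
    fun i hi => ⟨le_refl _, hlu i hi⟩
  refine ⟨S2, hS2sub, ∅, Finset.empty_subset _, hcardcond, l, hxbound, ?_⟩
  apply le_antisymm
  · unfold maxE
    apply Finset.sup_le
    intro i hi
    rw [EReal.coe_le_coe_iff]
    simp only [Finset.mem_union, Finset.notMem_empty, or_false] at hi
    rcases hi with hi | hi
    · exact le_max_of_le_left (kth_card_max I1 l hI1 i hi)
    · exact le_max_of_le_right (hS2le i hi)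
  · exact hpart1 S2 hS2sub ∅ (Finset.empty_subset _) hcardcond l hxbound
end

section
/- Mean fixed-budget upper bound: Fix s2 ≤ |I2| and s3 ≤ |I3|, and suppose it is not the case that I1 = ∅, s2 = |I2|, and s3 = 0. For any S2 ⊆ I2 with |I2\S2| = s2, any S3 ⊆ I3 with |S3| = s3, and any l ≤ x ≤ u, the mean of x over I1 ∪ S2 ∪ S3 is at most ( Σ_{i∈I1} u(i) + (sum of the (|I2| − s2) largest upper bounds in I2) + (sum of the s3 largest upper bounds in I3) ) / (|I1| + |I2| − s2 + s3); moreover this bound is tight. -/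
/-- Mean of `x` over a finset (equal to `0` on the empty set, since `x/0 = 0` in `ℝ`). -/
noncomputable def meanF {ι : Type*} (S : Finset ι) (x : ι → ℝ) : ℝ :=
  (∑ i ∈ S, x i) / S.card

/-- Sum of the `k` largest values of `u` over `J`. -/
noncomputable def topSum {ι : Type*} (J : Finset ι) (u : ι → ℝ) (k : ℕ) : ℝ :=
  ∑ i ∈ Finset.range k, kthLargest (J.val.map u) (i + 1)

/-- Sum of the `k` smallest values of `l` over `J`. -/
noncomputable def botSum {ι : Type*} (J : Finset ι) (l : ι → ℝ) (k : ℕ) : ℝ :=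
  ∑ i ∈ Finset.range k, kthSmallest (J.val.map l) (i + 1)

/-!
With the index sets disjoint, `I1 ∪ S2 ∪ S3` always has `|I1| + |I2| - s2 + s3` elements, so the
mean has a fixed denominator and only the numerator must be bounded. Termwise `x ≤ u`, and the
sum of `u` over a `k`-subset of `J` is at most the sum of the `k` largest values of `u` on `J`:
as lists, a sublist of a decreasingly sorted list has sum at most that of the prefix of the same
length. Equality is attained at `x = u` with `S2`, `S3` the indices of the largest upper bounds.
-/

open Finset

theorem List.sum_le_sum_take_of_sublist {α : Type*} [AddCommMonoid α] [PartialOrder α]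
    [IsOrderedAddMonoid α] {l₁ l₂ : List α} (hl₂ : l₂.Pairwise (· ≥ ·)) (h : l₁.Sublist l₂) :
    l₁.sum ≤ (l₂.take l₁.length).sum := by
  induction l₂ generalizing l₁ with
  | nil => simp [List.sublist_nil.mp h]
  | cons a l₂ ih =>
    rw [List.pairwise_cons] at hl₂
    cases h with
    | cons _ h =>
      cases l₁ with
      | nil => simp
      | cons b l₁ =>
        have hba : b ≤ a := hl₂.1 b (h.subset List.mem_cons_self)
        simpa using add_le_add hba (ih hl₂.2 ((List.sublist_cons_self b l₁).trans h))
    | cons_cons _ h => simpa using add_le_add_right (ih hl₂.2 h) a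

theorem List.sum_range_getD_eq_sum_take_s8 {α : Type*} [AddCommMonoid α] (l : List α) (k : ℕ) :
    ∑ i ∈ Finset.range k, l.getD i 0 = (l.take k).sum := by
  induction k with
  | zero => simp
  | succ k ih =>
    rw [Finset.sum_range_succ, ih, List.take_add_one, List.sum_append]
    cases h : l[k]? <;> simp [List.getD_eq_getElem?_getD, h]

theorem Multiset.exists_le_map_eq_of_le_map {α β : Type*} {f : α → β} {s : Multiset α}
    {t : Multiset β} (h : t ≤ s.map f) : ∃ s' ≤ s, s'.map f = t := by
  induction s using Quotient.inductionOn with | h l₂ => ?_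
  induction t using Quotient.inductionOn with | h l₁ => ?_
  obtain ⟨l, hperm, hsub⟩ := Multiset.coe_le.mp h
  obtain ⟨l', hl', rfl⟩ := List.sublist_map_iff.mp hsub
  exact ⟨l', Multiset.coe_le.mpr hl'.subperm, Multiset.coe_eq_coe.mpr hperm⟩

theorem Multiset.sum_le_sum_take_sort {α : Type*} [AddCommMonoid α] [LinearOrder α]
    [IsOrderedAddMonoid α] {s t : Multiset α} (h : t ≤ s) :
    t.sum ≤ ((s.sort (· ≤ ·)).reverse.take (card t)).sum := by
  have hle : (t.toList : Multiset α) ≤ (s.sort (· ≤ ·)).reverse := by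
    rwa [Multiset.coe_toList, Multiset.coe_reverse, Multiset.sort_eq]
  obtain ⟨l, hperm, hsub⟩ := Multiset.coe_le.mp hle
  have hsorted : ((s.sort (· ≤ ·)).reverse).Pairwise (· ≥ ·) :=
    List.pairwise_reverse.mpr (Multiset.pairwise_sort s _)
  rw [← Multiset.sum_toList, ← Multiset.length_toList, ← hperm.sum_eq, ← hperm.length_eq]
  exact List.sum_le_sum_take_of_sublist hsorted hsub

theorem topSum_eq_sum_take {ι : Type*} (J : Finset ι) (u : ι → ℝ) (k : ℕ) :
    topSum J u k = (((J.val.map u).sort (· ≤ ·)).reverse.take k).sum := by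
  rw [topSum, ← List.sum_range_getD_eq_sum_take_s8]
  rfl

theorem sum_le_topSum {ι : Type*} {J S : Finset ι} (u : ι → ℝ) (hS : S ⊆ J) :
    ∑ i ∈ S, u i ≤ topSum J u #S := by
  have := Multiset.sum_le_sum_take_sort (Multiset.map_le_map (f := u) (val_le_iff.mpr hS))
  rwa [Multiset.card_map, ← topSum_eq_sum_take] at this

theorem exists_subset_card_eq_sum_eq_topSum {ι : Type*} {J : Finset ι} (u : ι → ℝ) {k : ℕ}
    (hk : k ≤ #J) : ∃ S ⊆ J, #S = k ∧ ∑ i ∈ S, u i = topSum J u k := by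
  set L := ((J.val.map u).sort (· ≤ ·)).reverse
  have hL : (L : Multiset ℝ) = J.val.map u := by
    rw [Multiset.coe_reverse, Multiset.sort_eq]
  have htake : (L.take k : Multiset ℝ) ≤ J.val.map u :=
    hL ▸ Multiset.coe_le.mpr (List.take_sublist k L).subperm
  obtain ⟨s, hsJ, hs⟩ := Multiset.exists_le_map_eq_of_le_map htake
  refine ⟨⟨s, Multiset.nodup_of_le hsJ J.nodup⟩, val_le_iff.mp hsJ, ?_, ?_⟩
  · have hcard := congrArg Multiset.card hs
    simp only [Multiset.card_map, Multiset.coe_card, List.length_take, L, List.length_reverse,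
      Multiset.length_sort] at hcard
    simpa [hcard] using hk
  · rw [topSum_eq_sum_take, ← Multiset.sum_coe, ← hs]
    rfl

theorem meanF_union_union {ι : Type*} [DecidableEq ι] {A B C : Finset ι} (hAB : Disjoint A B)
    (hAC : Disjoint A C) (hBC : Disjoint B C) (x : ι → ℝ) :
    meanF (A ∪ B ∪ C) x =
      ((∑ i ∈ A, x i) + (∑ i ∈ B, x i) + (∑ i ∈ C, x i)) / ((#A + #B + #C : ℕ) : ℝ) := by
  have hABC : Disjoint (A ∪ B) C := disjoint_union_left.mpr ⟨hAC, hBC⟩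
  rw [meanF, sum_union hABC, sum_union hAB, card_union_of_disjoint hABC,
    card_union_of_disjoint hAB]

theorem stmt8_general {ι : Type*} [DecidableEq ι] (I1 I2 I3 : Finset ι)
    (h12 : Disjoint I1 I2) (h13 : Disjoint I1 I3) (h23 : Disjoint I2 I3)
    (l u : ι → ℝ) (hlu : ∀ i ∈ I1 ∪ I2 ∪ I3, l i ≤ u i)
    (s2 s3 : ℕ) (hs2 : s2 ≤ I2.card) (hs3 : s3 ≤ I3.card) :
    (∀ S2 ⊆ I2, ∀ S3 ⊆ I3, (I2 \ S2).card = s2 → S3.card = s3 →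
      ∀ x : ι → ℝ, (∀ i ∈ I1 ∪ I2 ∪ I3, l i ≤ x i ∧ x i ≤ u i) →
        meanF (I1 ∪ S2 ∪ S3) x ≤
          ((∑ i ∈ I1, u i) + topSum I2 u (I2.card - s2) + topSum I3 u s3) /
            ((I1.card + I2.card - s2 + s3 : ℕ) : ℝ)) ∧
    (∃ S2 ⊆ I2, ∃ S3 ⊆ I3, (I2 \ S2).card = s2 ∧ S3.card = s3 ∧
      ∃ x : ι → ℝ, (∀ i ∈ I1 ∪ I2 ∪ I3, l i ≤ x i ∧ x i ≤ u i) ∧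
        meanF (I1 ∪ S2 ∪ S3) x =
          ((∑ i ∈ I1, u i) + topSum I2 u (I2.card - s2) + topSum I3 u s3) /
            ((I1.card + I2.card - s2 + s3 : ℕ) : ℝ)) := by
  have mean_eq {S2 S3 : Finset ι} (hS2 : S2 ⊆ I2) (hS3 : S3 ⊆ I3) (hc2 : #(I2 \ S2) = s2)
      (hc3 : #S3 = s3) (x : ι → ℝ) : meanF (I1 ∪ S2 ∪ S3) x =
        ((∑ i ∈ I1, x i) + (∑ i ∈ S2, x i) + (∑ i ∈ S3, x i)) /
          ((I1.card + I2.card - s2 + s3 : ℕ) : ℝ) := by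
    have hden : #I1 + #S2 + #S3 = #I1 + #I2 - s2 + s3 := by
      have := card_le_card hS2
      rw [card_sdiff_of_subset hS2] at hc2
      omega
    rw [meanF_union_union (h12.mono_right hS2) (h13.mono_right hS3) (h23.mono hS2 hS3), hden]
  refine ⟨fun S2 hS2 S3 hS3 hc2 hc3 x hx => ?_, ?_⟩
  · have hxu {S : Finset ι} (hS : S ⊆ I1 ∪ I2 ∪ I3) : ∑ i ∈ S, x i ≤ ∑ i ∈ S, u i :=
      sum_le_sum fun i hi => (hx i (hS hi)).2
    have hS2card : #S2 = #I2 - s2 := by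
      rw [← hc2, card_sdiff_of_subset hS2, Nat.sub_sub_self (card_le_card hS2)]
    rw [mean_eq hS2 hS3 hc2 hc3]
    gcongr ?_ / _
    grw [hxu (by grind), hxu (by grind), hxu (by grind),
      sum_le_topSum u hS2, sum_le_topSum u hS3, hS2card, hc3]
  · obtain ⟨S2, hS2, hc2, hsum2⟩ := exists_subset_card_eq_sum_eq_topSum u (Nat.sub_le #I2 s2)
    obtain ⟨S3, hS3, hc3, hsum3⟩ := exists_subset_card_eq_sum_eq_topSum u hs3
    have hc2' : #(I2 \ S2) = s2 := by
      rw [card_sdiff_of_subset hS2, hc2]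
      omega
    refine ⟨S2, hS2, S3, hS3, hc2', hc3, u, fun i hi => ⟨hlu i hi, le_rfl⟩, ?_⟩
    rw [mean_eq hS2 hS3 hc2' hc3, hsum2, hsum3]

/-- Mean fixed-budget upper bound, with tightness. -/
theorem stmt8 {ι : Type*} [DecidableEq ι] (I1 I2 I3 : Finset ι)
    (h12 : Disjoint I1 I2) (h13 : Disjoint I1 I3) (h23 : Disjoint I2 I3)
    (l u : ι → ℝ) (hlu : ∀ i ∈ I1 ∪ I2 ∪ I3, l i ≤ u i)
    (s2 s3 : ℕ) (hs2 : s2 ≤ I2.card) (hs3 : s3 ≤ I3.card)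
    (hne : ¬ (I1 = ∅ ∧ s2 = I2.card ∧ s3 = 0)) :
    (∀ S2 ⊆ I2, ∀ S3 ⊆ I3, (I2 \ S2).card = s2 → S3.card = s3 →
      ∀ x : ι → ℝ, (∀ i ∈ I1 ∪ I2 ∪ I3, l i ≤ x i ∧ x i ≤ u i) →
        meanF (I1 ∪ S2 ∪ S3) x ≤
          ((∑ i ∈ I1, u i) + topSum I2 u (I2.card - s2) + topSum I3 u s3) /
            ((I1.card + I2.card - s2 + s3 : ℕ) : ℝ)) ∧
    (∃ S2 ⊆ I2, ∃ S3 ⊆ I3, (I2 \ S2).card = s2 ∧ S3.card = s3 ∧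
      ∃ x : ι → ℝ, (∀ i ∈ I1 ∪ I2 ∪ I3, l i ≤ x i ∧ x i ≤ u i) ∧
        meanF (I1 ∪ S2 ∪ S3) x =
          ((∑ i ∈ I1, u i) + topSum I2 u (I2.card - s2) + topSum I3 u s3) /
            ((I1.card + I2.card - s2 + s3 : ℕ) : ℝ)) :=
  stmt8_general I1 I2 I3 h12 h13 h23 l u hlu s2 s3 hs2 hs3
end
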